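/- The number of 312-avoiding double simsun permutations in S_n with exactly k descents equals the binomial coefficient C(n, 2k); the same holds for 231-avoiding double simsun permutations. -/

import Mathlib

/-- A permutation `σ ∈ S_n` is *simsun* if for every `k`, the subword of `σ`
restricted to the `k` smallest values has no double descent, i.e. no three
consecutive (in that subword) decreasing elements. -/
def Simsun {n : ℕ} (σ : Equiv.Perm (Fin n)) : Prop :=
  ∀ k : ℕ, ¬ ∃ i j l : Fin n, i < j ∧ j < l ∧
    (σ i).val < k ∧ (σ j).val < k ∧ (σ l).val < k ∧
    σ l < σ j ∧ σ j < σ i ∧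
    (∀ m : Fin n, i < m → m < j → k ≤ (σ m).val) ∧
    (∀ m : Fin n, j < m → m < l → k ≤ (σ m).val)

def DoubleSimsun {n : ℕ} (σ : Equiv.Perm (Fin n)) : Prop :=
  Simsun σ ∧ Simsun σ⁻¹

def Avoids123 {n : ℕ} (σ : Equiv.Perm (Fin n)) : Prop :=
  ¬ ∃ i j k : Fin n, i < j ∧ j < k ∧ σ i < σ j ∧ σ j < σ k

def Avoids132 {n : ℕ} (σ : Equiv.Perm (Fin n)) : Prop :=
  ¬ ∃ i j k : Fin n, i < j ∧ j < k ∧ σ i < σ k ∧ σ k < σ j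

def Avoids213 {n : ℕ} (σ : Equiv.Perm (Fin n)) : Prop :=
  ¬ ∃ i j k : Fin n, i < j ∧ j < k ∧ σ j < σ i ∧ σ i < σ k

def Avoids231 {n : ℕ} (σ : Equiv.Perm (Fin n)) : Prop :=
  ¬ ∃ i j k : Fin n, i < j ∧ j < k ∧ σ k < σ i ∧ σ i < σ j

def Avoids312 {n : ℕ} (σ : Equiv.Perm (Fin n)) : Prop :=
  ¬ ∃ i j k : Fin n, i < j ∧ j < k ∧ σ j < σ k ∧ σ k < σ i

def Avoids321 {n : ℕ} (σ : Equiv.Perm (Fin n)) : Prop :=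
  ¬ ∃ i j k : Fin n, i < j ∧ j < k ∧ σ k < σ j ∧ σ j < σ i

/-- An occurrence of the pattern 4132 at positions `i1 < i2 < i3 < i4`. -/
def Pattern4132At {n : ℕ} (σ : Equiv.Perm (Fin n)) (i1 i2 i3 i4 : Fin n) : Prop :=
  i1 < i2 ∧ i2 < i3 ∧ i3 < i4 ∧ σ i2 < σ i4 ∧ σ i4 < σ i3 ∧ σ i3 < σ i1

/-- An occurrence of the pattern 51342 at positions `j1 < j2 < j3 < j4 < j5`. -/
def Pattern51342At {n : ℕ} (σ : Equiv.Perm (Fin n)) (j1 j2 j3 j4 j5 : Fin n) : Prop :=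
  j1 < j2 ∧ j2 < j3 ∧ j3 < j4 ∧ j4 < j5 ∧
  σ j2 < σ j5 ∧ σ j5 < σ j3 ∧ σ j3 < σ j4 ∧ σ j4 < σ j1

/-- `σ` has no occurrence of the pattern 4132. -/
def No4132 {n : ℕ} (σ : Equiv.Perm (Fin n)) : Prop :=
  ¬ ∃ i1 i2 i3 i4 : Fin n, Pattern4132At σ i1 i2 i3 i4

/-- Every occurrence of the pattern 4132 in `σ` is contained in an occurrence
of the pattern 51342 (its four indices are among the five indices). -/
def Every4132In51342 {n : ℕ} (σ : Equiv.Perm (Fin n)) : Prop :=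
  ∀ i1 i2 i3 i4 : Fin n, Pattern4132At σ i1 i2 i3 i4 →
    ∃ j1 j2 j3 j4 j5 : Fin n, Pattern51342At σ j1 j2 j3 j4 j5 ∧
      ({i1, i2, i3, i4} : Set (Fin n)) ⊆ ({j1, j2, j3, j4, j5} : Set (Fin n))

def Contains35142 {n : ℕ} (σ : Equiv.Perm (Fin n)) : Prop :=
  ∃ i1 i2 i3 i4 i5 : Fin n, i1 < i2 ∧ i2 < i3 ∧ i3 < i4 ∧ i4 < i5 ∧
    σ i3 < σ i5 ∧ σ i5 < σ i1 ∧ σ i1 < σ i4 ∧ σ i4 < σ i2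

def Contains42513 {n : ℕ} (σ : Equiv.Perm (Fin n)) : Prop :=
  ∃ i1 i2 i3 i4 i5 : Fin n, i1 < i2 ∧ i2 < i3 ∧ i3 < i4 ∧ i4 < i5 ∧
    σ i4 < σ i2 ∧ σ i2 < σ i5 ∧ σ i5 < σ i1 ∧ σ i1 < σ i3

/-- A Motzkin path encoded as a list of steps `1` (up), `-1` (down), `0` (level):
all prefix sums are nonnegative and the total sum is zero. -/
def MotzkinPath (p : List ℤ) : Prop :=
  (∀ s ∈ p, s = 1 ∨ s = -1 ∨ s = 0) ∧ (∀ t : List ℤ, t <+: p → 0 ≤ t.sum) ∧ p.sum = 0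

/-- The path has no two consecutive up steps. -/
def UUFree (p : List ℤ) : Prop := ¬ ([1, 1] : List ℤ) <:+: p

-- The number of descents of a permutation
open scoped Classical in
noncomputable def numDescents {n : ℕ} (σ : Equiv.Perm (Fin n)) : ℕ :=
  (Finset.univ.filter fun i : Fin n =>
    ∃ h : i.val + 1 < n, σ ⟨i.val + 1, h⟩ < σ i).card

/-- `τ_1 > τ_2 < τ_3 > τ_4 < ⋯` (indices are 0-based here). -/
def Alternating {m : ℕ} (τ : Equiv.Perm (Fin m)) : Prop :=
  ∀ i : Fin m, ∀ h : i.val + 1 < m,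
    if i.val % 2 = 0 then τ ⟨i.val + 1, h⟩ < τ i else τ i < τ ⟨i.val + 1, h⟩


/-!
A 312-avoiding simsun permutation also avoids 321: a 321 of minimal span is a double descent
in the subword of the values not exceeding its largest entry, since any intermediate entry of
that subword would create a 312 or a shorter 321. The permutations avoiding both 312 and 321 are exactly those with
`σ i ≤ i + 1`, and these are automatically double simsun. Such a permutation is a product of
rotations `a ↦ a + 1 ↦ ⋯ ↦ b ↦ a` of disjoint intervals `[a, b]`; each rotation contributes
exactly one descent to `σ` and one to `σ⁻¹`, and `σ` is determined by the `2k` interval ends,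
which can be any `2k`-subset. Inversion carries the 231 case to the 312 case.
-/

open Equiv Finset

variable {n : ℕ} {σ τ : Perm (Fin n)}

def SuccBounded (σ : Perm (Fin n)) : Prop := ∀ i, (σ i : ℕ) ≤ i + 1

namespace SuccBounded

/-- Pigeonhole: otherwise `σ` would map `Iic j` injectively into `Iic j \ {σ i}`. -/
theorem apply_eq_succ_of_apply_le (hσ : SuccBounded σ) {i j : Fin n} (hji : j < i)
    (hv : (σ i : ℕ) ≤ j) : (σ j : ℕ) = j + 1 := by
  by_contra hne
  have hmaps : Set.MapsTo σ (Iic j) ((Iic j).erase (σ i)) := by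
    intro m hm
    simp only [coe_Iic, Set.mem_Iic, coe_erase, Set.mem_sdiff, Set.mem_singleton_iff] at hm ⊢
    refine ⟨?_, fun h => by have := σ.injective h; omega⟩
    have := hσ m
    have : m ≠ j ∨ (σ m : ℕ) ≠ j + 1 := by by_cases hmj : m = j <;> simp_all
    omega
  have := card_le_card_of_injOn σ hmaps σ.injective.injOn
  rw [card_erase_of_mem (by simpa using hv), Fin.card_Iic] at this
  omega

theorem apply_lt_of_apply_lt (hσ : SuccBounded σ) {i j l : Fin n} (hij : i < j) (hjl : j < l)
    (hj : σ j < σ i) : σ i < σ l := by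
  by_contra! hl
  have hl' : σ l ≠ σ i := fun h => by have := σ.injective h; omega
  have := hσ.apply_eq_succ_of_apply_le hjl (by have := hσ i; omega)
  have := hσ i
  omega

theorem avoids312 (hσ : SuccBounded σ) : Avoids312 σ := by
  rintro ⟨i, j, l, hij, hjl, hjl', hli⟩
  exact lt_asymm hli (hσ.apply_lt_of_apply_lt hij hjl (hjl'.trans hli))

theorem avoids321 (hσ : SuccBounded σ) : Avoids321 σ := by
  rintro ⟨i, j, l, hij, hjl, hlj, hji⟩
  exact lt_asymm (hlj.trans hji) (hσ.apply_lt_of_apply_lt hij hjl hji)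

end SuccBounded

theorem exists_two_smaller_after_of_succ_lt {i : Fin n} (hi : (i : ℕ) + 1 < σ i) :
    ∃ p q, i < p ∧ p < q ∧ σ p < σ i ∧ σ q < σ i := by
  set B := univ.filter fun m => i < m ∧ σ m < σ i
  have hmaps : Set.MapsTo ⇑σ⁻¹ (Iio (σ i)) ↑(Iio i ∪ B) := by
    intro v hv
    simp only [coe_Iio, Set.mem_Iio, coe_union, coe_filter, Set.mem_union, mem_univ, true_and,
      B] at hv ⊢
    rcases lt_trichotomy (σ⁻¹ v) i with h | h | h
    · exact .inl h
    · simp [← h] at hv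
    · exact .inr ⟨h, by simpa using hv⟩
  have hcard := (card_le_card_of_injOn _ hmaps σ⁻¹.injective.injOn).trans (card_union_le _ _)
  rw [Fin.card_Iio, Fin.card_Iio] at hcard
  obtain ⟨p, hp, q, hq, hpq⟩ := one_lt_card.1 (by omega : 1 < B.card)
  simp only [mem_filter, mem_univ, true_and, B] at hp hq
  rcases hpq.lt_or_gt with h | h
  · exact ⟨p, q, hp.1, h, hp.2, hq.2⟩
  · exact ⟨q, p, hq.1, h, hq.2, hp.2⟩

theorem succBounded_of_avoids312_of_avoids321 (h312 : Avoids312 σ) (h321 : Avoids321 σ) :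
    SuccBounded σ := by
  intro i
  by_contra! hi
  obtain ⟨p, q, hip, hpq, hp, hq⟩ := exists_two_smaller_after_of_succ_lt hi
  rcases lt_or_gt_of_ne (σ.injective.ne hpq.ne) with h | h
  · exact h312 ⟨i, p, q, hip, hpq, h, hq⟩
  · exact h321 ⟨i, p, q, hip, hpq, h, hp⟩

theorem Avoids321.simsun (h : Avoids321 σ) : Simsun σ :=
  fun _ ⟨i, j, l, hij, hjl, _, _, _, hlj, hji, _⟩ => h ⟨i, j, l, hij, hjl, hlj, hji⟩

theorem Avoids321.inv (h : Avoids321 σ) : Avoids321 σ⁻¹ := by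
  rintro ⟨i, j, l, hij, hjl, hlj, hji⟩
  exact h ⟨σ⁻¹ l, σ⁻¹ j, σ⁻¹ i, hlj, hji, by simpa using hij, by simpa using hjl⟩

theorem avoids321_of_avoids312_of_simsun (h312 : Avoids312 σ) (hs : Simsun σ) :
    Avoids321 σ := by
  rintro ⟨i, j, l, hij, hjl, hlj, hji⟩
  induction hd : (l : ℕ) - i using Nat.strong_induction_on generalizing i j l with
  | _ d ih =>
  refine hs (σ i + 1) ⟨i, j, l, hij, hjl, by omega, by omega, by omega, hlj, hji, ?_, ?_⟩
  · intro m him hmj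
    by_contra! hm
    have hm : σ m < σ i := lt_of_le_of_ne (by omega) (σ.injective.ne him.ne')
    rcases lt_or_gt_of_ne (σ.injective.ne hmj.ne) with h | h
    · exact h312 ⟨i, m, j, him, hmj, h, hji⟩
    · exact ih _ (by omega) m j l hmj hjl hlj h rfl
  · intro m hjm hml
    by_contra! hm
    have hm : σ m < σ i := lt_of_le_of_ne (by omega) (σ.injective.ne (hij.trans hjm).ne')
    rcases lt_or_gt_of_ne (σ.injective.ne hjm.ne') with h | h
    · exact ih _ (by omega) i j m hij hjm h hji rfl
    · exact h312 ⟨i, j, m, hij, hjm, h, hm⟩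

theorem avoids312_and_doubleSimsun_iff : Avoids312 σ ∧ DoubleSimsun σ ↔ SuccBounded σ :=
  ⟨fun ⟨h312, hs, _⟩ =>
      succBounded_of_avoids312_of_avoids321 h312 (avoids321_of_avoids312_of_simsun h312 hs),
    fun hσ => ⟨hσ.avoids312, hσ.avoids321.simsun, hσ.avoids321.inv.simsun⟩⟩

def drops (σ : Perm (Fin n)) : Finset (Fin n) := univ.filter fun i => σ i < i

/-- For a `SuccBounded` permutation these are the two ends of each interval that it rotates. -/
def endpoints (σ : Perm (Fin n)) : Finset (Fin n) := drops σ ∪ (drops σ).image σ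

@[simp]
theorem mem_drops {i : Fin n} : i ∈ drops σ ↔ σ i < i := by simp [drops]

theorem mem_endpoints {i : Fin n} : i ∈ endpoints σ ↔ σ i < i ∨ ∃ j, σ j < j ∧ σ j = i := by
  simp [endpoints]

namespace SuccBounded

theorem card_endpoints (hσ : SuccBounded σ) : (endpoints σ).card = 2 * (drops σ).card := by
  rw [endpoints, card_union_of_disjoint, card_image_of_injective _ σ.injective, two_mul]
  refine disjoint_left.2 fun i hi hi' => ?_
  obtain ⟨j, hj, rfl⟩ := mem_image.1 hi'
  have := hσ.apply_eq_succ_of_apply_le (mem_drops.1 hj) le_rfl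
  simp only [mem_drops] at hi
  omega

/-- A descent at `i` is exactly a drop at `i + 1`. -/
theorem numDescents_eq (hσ : SuccBounded σ) : numDescents σ = (drops σ).card := by
  refine card_bij' (fun i hi => ⟨i + 1, (mem_filter.1 hi).2.1⟩)
    (fun j hj => ⟨j - 1, by omega⟩) (fun i hi => ?_) (fun j hj => ?_)
    (fun _ _ => Fin.ext (by simp)) (fun j hj => Fin.ext (by simp at hj ⊢; omega))
  · obtain ⟨h, hi⟩ := (mem_filter.1 hi).2
    exact mem_drops.2 (Fin.lt_def.2 ((Fin.lt_def.1 hi).trans_le (hσ i)))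
  · rw [mem_drops] at hj
    have hprev := hσ.apply_eq_succ_of_apply_le (i := j) (j := ⟨j - 1, by omega⟩)
      (Fin.lt_def.2 (by simp only; omega)) (by simp only; omega)
    refine mem_filter.2 ⟨mem_univ _, by simp only; omega, ?_⟩
    have hj' : (⟨j - 1 + 1, by omega⟩ : Fin n) = j := Fin.ext (by simp only; omega)
    rw [hj', Fin.lt_def, hprev]
    simp only
    omega

/-- A descent of `σ⁻¹` at `i` is exactly a drop of `σ` at `σ⁻¹ i`. -/
theorem numDescents_inv_eq (hσ : SuccBounded σ) : numDescents σ⁻¹ = (drops σ).card := by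
  refine card_bij' (fun i _ => σ⁻¹ i) (fun j _ => σ j) (fun i hi => ?_) (fun j hj => ?_)
    (fun _ _ => by simp) (fun _ _ => by simp)
  · obtain ⟨h, hi⟩ := (mem_filter.1 hi).2
    have := hσ (σ⁻¹ ⟨i + 1, h⟩)
    rw [Perm.coe_inv, apply_symm_apply] at this
    rw [mem_drops, Perm.coe_inv, apply_symm_apply, Fin.lt_def]
    simp only [Perm.coe_inv, Fin.lt_def] at this hi
    omega
  · rw [mem_drops] at hj
    have hsucc := hσ.apply_eq_succ_of_apply_le hj le_rfl
    refine mem_filter.2 ⟨mem_univ _, by omega, ?_⟩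
    have : (⟨σ j + 1, by omega⟩ : Fin n) = σ (σ j) := Fin.ext hsucc.symm
    simpa [this] using hj

theorem apply_eq_succ_iff (hσ : SuccBounded σ) (i : Fin n) :
    (σ i : ℕ) = i + 1 ↔ (i ∈ endpoints σ ↔ ∀ m < i, σ m ≠ i) := by
  rw [mem_endpoints]
  constructor
  · intro h
    have hi : ¬ σ i < i := by omega
    simp only [hi, false_or]
    constructor
    · rintro ⟨j, hj, rfl⟩ m hm hmj
      rw [σ.injective hmj] at hm
      exact lt_asymm hm hj
    · intro hall
      refine ⟨σ⁻¹ i, ?_, by simp⟩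
      have hne : σ⁻¹ i ≠ i := fun he => by rw [Perm.inv_eq_iff_eq] at he; omega
      have hge : ¬ σ⁻¹ i < i := fun hlt => hall _ hlt (by simp)
      simp only [Perm.coe_inv, apply_symm_apply] at hne hge ⊢
      omega
  · intro h
    by_contra hne
    have hle : (σ i : ℕ) ≤ i := by have := hσ i; omega
    rcases hle.lt_or_eq with hlt | heq
    · have hprev := hσ.apply_eq_succ_of_apply_le (i := i) (j := ⟨i - 1, by omega⟩)
        (Fin.lt_def.2 (by simp only; omega)) (by simp only; omega)
      exact h.1 (.inl (Fin.lt_def.2 hlt)) ⟨i - 1, by omega⟩ (Fin.lt_def.2 (by simp only; omega))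
        (Fin.ext (by simp only at hprev ⊢; omega))
    · have hfix : σ i = i := Fin.ext heq
      have hnot : ¬ (σ i < i ∨ ∃ j, σ j < j ∧ σ j = i) := by
        rintro (h' | ⟨j, hj, hji⟩)
        · exact h'.ne hfix
        · rw [← hfix] at hji
          rw [σ.injective hji] at hj
          exact hj.ne hfix
      exact hnot (h.2 fun m hm hmi => hm.ne (σ.injective (hmi.trans hfix.symm)))

theorem apply_le_of_eqOn_Iio (hτ : SuccBounded τ) {i : Fin n} (h : ∀ m < i, σ m = τ m)
    (hτi : (τ i : ℕ) ≠ i + 1) : τ i ≤ σ i := by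
  by_contra! hlt
  have hτm : τ (τ⁻¹ (σ i)) = σ i := by simp
  have him : i < τ⁻¹ (σ i) := by
    rcases lt_trichotomy (τ⁻¹ (σ i)) i with h' | h' | h'
    · rw [← h _ h', σ.injective.eq_iff] at hτm
      exact absurd hτm h'.ne
    · rw [h'] at hτm
      exact absurd hτm hlt.ne'
    · exact h'
  exact hτi (hτ.apply_eq_succ_of_apply_le him (by have := hτ i; omega))

theorem eq_of_endpoints_eq (hσ : SuccBounded σ) (hτ : SuccBounded τ)
    (h : endpoints σ = endpoints τ) : σ = τ := by
  refine Equiv.ext fun i => ?_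
  induction i using WellFoundedLT.induction with
  | _ i ih =>
  have hsucc : (σ i : ℕ) = i + 1 ↔ (τ i : ℕ) = i + 1 := by
    rw [hσ.apply_eq_succ_iff, hτ.apply_eq_succ_iff, h]
    exact iff_congr Iff.rfl (forall₂_congr fun m hm => by rw [ih m hm])
  by_cases hs : (σ i : ℕ) = i + 1
  · exact Fin.ext (hs.trans (hsucc.1 hs).symm)
  · exact le_antisymm (hσ.apply_le_of_eqOn_Iio (fun m hm => (ih m hm).symm) hs)
      (hτ.apply_le_of_eqOn_Iio ih (mt hsucc.2 hs))

end SuccBounded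
section SplitProduct

variable {a : Fin n}

theorem mul_apply_of_lt_of_fixes (hσ : ∀ i, a ≤ i → σ i = i) (hτ : ∀ i, i < a → τ i = i)
    {i : Fin n} (hi : i < a) : (τ * σ) i = σ i := by
  refine hτ _ (lt_of_not_ge fun h => ?_)
  rw [σ.injective (hσ _ h)] at h
  exact absurd hi (not_lt.2 h)

theorem mul_apply_of_le_of_fixes (hσ : ∀ i, a ≤ i → σ i = i) {i : Fin n} (hi : a ≤ i) :
    (τ * σ) i = τ i := by
  rw [Perm.mul_apply, hσ i hi]

theorem SuccBounded.mul_of_fixes (hσ' : SuccBounded σ) (hτ' : SuccBounded τ)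
    (hσ : ∀ i, a ≤ i → σ i = i) (hτ : ∀ i, i < a → τ i = i) : SuccBounded (τ * σ) := by
  intro i
  rcases lt_or_ge i a with hi | hi
  · rw [mul_apply_of_lt_of_fixes hσ hτ hi]; exact hσ' i
  · rw [mul_apply_of_le_of_fixes hσ hi]; exact hτ' i

theorem endpoints_mul_of_fixes (hσ : ∀ i, a ≤ i → σ i = i) (hτ : ∀ i, i < a → τ i = i) :
    endpoints (τ * σ) = endpoints σ ∪ endpoints τ := by
  have hdσ : ∀ i ∈ drops σ, i < a := fun i hi =>
    lt_of_not_ge fun h => (mem_drops.1 hi).ne (hσ i h)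
  have hdτ : ∀ i ∈ drops τ, a ≤ i := fun i hi =>
    le_of_not_gt fun h => (mem_drops.1 hi).ne (hτ i h)
  have hdrops : drops (τ * σ) = drops σ ∪ drops τ := by
    ext i
    rcases lt_or_ge i a with hi | hi
    · simp [mul_apply_of_lt_of_fixes hσ hτ hi, hτ i hi]
    · simp [mul_apply_of_le_of_fixes hσ hi, hσ i hi]
  rw [endpoints, endpoints, endpoints, hdrops, image_union,
    image_congr fun i hi => mul_apply_of_lt_of_fixes hσ hτ (hdσ i hi),
    image_congr fun i hi => mul_apply_of_le_of_fixes hσ (hdτ i hi), union_union_union_comm]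

end SplitProduct

theorem val_cycleIcc_apply {a b : Fin n} (hab : a < b) (k : Fin n) :
    (Fin.cycleIcc a b k : ℕ) =
      if k < a ∨ b < k then (k : ℕ) else if k = b then (a : ℕ) else k + 1 := by
  have := a.neZero
  split_ifs with h₁ h₂
  · rcases h₁ with h | h
    · rw [Fin.cycleIcc_of_lt h]
    · rw [Fin.cycleIcc_of_gt h]
  · rw [h₂, Fin.cycleIcc_of_last hab.le]
  · simp only [not_or, not_lt] at h₁
    rw [Fin.cycleIcc_of_ge_of_lt h₁.1 (lt_of_le_of_ne h₁.2 h₂), Fin.val_add_one_of_lt']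
    omega

theorem succBounded_cycleIcc {a b : Fin n} (hab : a < b) : SuccBounded (Fin.cycleIcc a b) := by
  intro k
  rw [val_cycleIcc_apply hab]
  split_ifs <;> omega

theorem endpoints_cycleIcc {a b : Fin n} (hab : a < b) :
    endpoints (Fin.cycleIcc a b) = {a, b} := by
  have := a.neZero
  have hdrops : drops (Fin.cycleIcc a b) = {b} := by
    ext k
    rw [mem_drops, mem_singleton, Fin.lt_def, val_cycleIcc_apply hab]
    split_ifs <;> omega
  rw [endpoints, hdrops, image_singleton, Fin.cycleIcc_of_last hab.le, union_comm]
  rfl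

theorem exists_succBounded_endpoints_eq (k : ℕ) (s : Finset (Fin n)) (hs : s.card = 2 * k) :
    ∃ σ : Perm (Fin n), SuccBounded σ ∧ endpoints σ = s ∧ ∀ i, (∀ c ∈ s, c < i) → σ i = i := by
  induction k generalizing s with
  | zero =>
    refine ⟨1, fun i => by simp, ?_, fun i _ => rfl⟩
    simp [card_eq_zero.1 hs, endpoints, drops]
  | succ k ih =>
    have hne : s.Nonempty := card_pos.1 (by omega)
    set b := s.max' hne
    have hb : b ∈ s := s.max'_mem hne
    have hne' : (s.erase b).Nonempty := card_pos.1 (by rw [card_erase_of_mem hb]; omega)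
    set a := (s.erase b).max' hne'
    have ha : a ∈ s.erase b := (s.erase b).max'_mem hne'
    have hab : a < b := lt_of_le_of_ne (s.le_max' a (mem_of_mem_erase ha)) (ne_of_mem_erase ha)
    obtain ⟨σ, hσ, hσs, hσfix⟩ := ih ((s.erase b).erase a)
      (by rw [card_erase_of_mem ha, card_erase_of_mem hb]; omega)
    have hσa : ∀ i, a ≤ i → σ i = i := fun i hi => hσfix i fun c hc =>
      ((s.erase b).le_max' c (mem_of_mem_erase hc)).lt_of_ne (ne_of_mem_erase hc) |>.trans_le hi
    have hca : ∀ i, i < a → Fin.cycleIcc a b i = i := fun i hi => Fin.cycleIcc_of_lt hi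
    refine ⟨Fin.cycleIcc a b * σ, hσ.mul_of_fixes (succBounded_cycleIcc hab) hσa hca, ?_, ?_⟩
    · rw [endpoints_mul_of_fixes hσa hca, hσs, endpoints_cycleIcc hab, union_comm, insert_union,
        singleton_union, insert_comm, insert_erase ha, insert_erase hb]
    · intro i hi
      have hbi := hi b hb
      rw [mul_apply_of_le_of_fixes hσa (hab.trans hbi).le, Fin.cycleIcc_of_gt hbi]

theorem card_succBounded_card_drops (n k : ℕ) :
    Nat.card {σ : Perm (Fin n) // SuccBounded σ ∧ (drops σ).card = k} = n.choose (2 * k) := by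
  let f : {σ : Perm (Fin n) // SuccBounded σ ∧ (drops σ).card = k} →
      {s : Finset (Fin n) // s.card = 2 * k} :=
    fun σ => ⟨endpoints σ.1, by rw [σ.2.1.card_endpoints, σ.2.2]⟩
  have hf : Function.Bijective f := by
    refine ⟨fun σ τ h => Subtype.ext (σ.2.1.eq_of_endpoints_eq τ.2.1 (congrArg Subtype.val h)),
      fun ⟨s, hs⟩ => ?_⟩
    obtain ⟨σ, hσ, hσs, -⟩ := exists_succBounded_endpoints_eq k s hs
    have hk : (drops σ).card = k := by
      have := hσ.card_endpoints
      rw [hσs, hs] at this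
      omega
    exact ⟨⟨σ, hσ, hk⟩, Subtype.ext hσs⟩
  rw [Nat.card_congr (Equiv.ofBijective f hf), Nat.card_eq_fintype_card,
    Fintype.card_finset_len, Fintype.card_fin]

theorem avoids231_iff_avoids312_inv : Avoids231 σ ↔ Avoids312 σ⁻¹ := by
  constructor
  · rintro h ⟨i, j, l, hij, hjl, hjl', hli⟩
    exact h ⟨σ⁻¹ j, σ⁻¹ l, σ⁻¹ i, hjl', hli, by simpa using hij, by simpa using hjl⟩
  · rintro h ⟨i, j, l, hij, hjl, hli, hij'⟩
    exact h ⟨σ l, σ i, σ j, hli, hij', by simpa using hij, by simpa using hjl⟩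

/-- The number of 312-avoiding double simsun permutations in `S_n` with
exactly `k` descents is `C(n, 2k)`; the same holds for 231-avoiding double
simsun permutations. -/
theorem card_doubleSimsun_descents_eq_choose (n k : ℕ) :
    Nat.card {σ : Equiv.Perm (Fin n) // Avoids312 σ ∧ DoubleSimsun σ ∧ numDescents σ = k} =
      n.choose (2 * k) ∧
    Nat.card {σ : Equiv.Perm (Fin n) // Avoids231 σ ∧ DoubleSimsun σ ∧ numDescents σ = k} =
      n.choose (2 * k) := by
  have h312 : ∀ σ : Perm (Fin n), Avoids312 σ ∧ DoubleSimsun σ ∧ numDescents σ = k ↔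
      SuccBounded σ ∧ (drops σ).card = k := fun σ => by
    rw [← and_assoc, avoids312_and_doubleSimsun_iff]
    exact and_congr_right fun hσ => by rw [hσ.numDescents_eq]
  have h231 : ∀ σ : Perm (Fin n), Avoids231 σ ∧ DoubleSimsun σ ∧ numDescents σ = k ↔
      SuccBounded σ⁻¹ ∧ (drops σ⁻¹).card = k := fun σ => by
    have hds : DoubleSimsun σ ↔ DoubleSimsun σ⁻¹ := by
      rw [DoubleSimsun, DoubleSimsun, inv_inv, and_comm]
    rw [avoids231_iff_avoids312_inv, hds, ← and_assoc, avoids312_and_doubleSimsun_iff]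
    exact and_congr_right fun hσ => by rw [← hσ.numDescents_inv_eq, inv_inv]
  exact ⟨(Nat.card_congr (subtypeEquivRight h312)).trans (card_succBounded_card_drops n k),
    (Nat.card_congr (subtypeEquiv (Equiv.inv _) h231)).trans (card_succBounded_card_drops n k)⟩
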